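/- Let Q be the quiver with vertices 1,...,n (n ≥ 3), arrows α from 2 to 1, β from 3 to 2, an arrow from 3 to 1, and arrows i → i-1 for i = 4,...,n, with relation αβ = 0. If M is an indecomposable representation of the bound quiver (Q, αβ=0) over a field k such that both M_α ≠ 0 and M_β ≠ 0, then there exists a nonzero endomorphism φ of M with φ² = 0. -/
import Mathlib


/-- A representation of the bound quiver (Q, αβ = 0): vertices 1,…,n (n ≥ 3),
arrows α : 2 → 1, β : 3 → 2, γ : 3 → 1, and arrows δᵢ : i → i-1 for 4 ≤ i ≤ n,
with the relation α ∘ β = 0. -/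
structure QRep (k : Type) [Field k] (n : ℕ) where
  V : ℕ → Type
  [acg : ∀ i, AddCommGroup (V i)]
  [mod : ∀ i, Module k (V i)]
  fd : ∀ i, FiniteDimensional k (V i)
  supp : ∀ i, (i = 0 ∨ n < i) → Subsingleton (V i)
  α : V 2 →ₗ[k] V 1
  β : V 3 →ₗ[k] V 2
  γ : V 3 →ₗ[k] V 1
  δ : ∀ i, 4 ≤ i → i ≤ n → (V i →ₗ[k] V (i-1))
  rel : α ∘ₗ β = 0

attribute [instance] QRep.acg QRep.mod

variable {k : Type} [Field k] {n : ℕ}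

/-- An endomorphism of a representation of (Q, αβ = 0): linear maps at each
vertex commuting with all arrow maps. -/
structure QEnd (M : QRep k n) where
  f : ∀ i, M.V i →ₗ[k] M.V i
  commα : f 1 ∘ₗ M.α = M.α ∘ₗ f 2
  commβ : f 2 ∘ₗ M.β = M.β ∘ₗ f 3
  commγ : f 1 ∘ₗ M.γ = M.γ ∘ₗ f 3
  commδ : ∀ i (h1 : 4 ≤ i) (h2 : i ≤ n),
    f (i-1) ∘ₗ M.δ i h1 h2 = M.δ i h1 h2 ∘ₗ f i

/-- A family of subspaces closed under all the arrow maps (a subrepresentation). -/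
def IsSubrep (M : QRep k n) (p : ∀ i, Submodule k (M.V i)) : Prop :=
  (∀ x ∈ p 2, M.α x ∈ p 1) ∧ (∀ x ∈ p 3, M.β x ∈ p 2) ∧
  (∀ x ∈ p 3, M.γ x ∈ p 1) ∧
  (∀ i (h1 : 4 ≤ i) (h2 : i ≤ n), ∀ x ∈ p i, M.δ i h1 h2 x ∈ p (i-1))

/-- A representation is indecomposable iff it is nonzero and admits no splitting
into two nonzero complementary subrepresentations. -/
def QIndec (M : QRep k n) : Prop :=
  (∃ i, ∃ x : M.V i, x ≠ 0) ∧
  ∀ p q, IsSubrep M p → IsSubrep M q → (∀ i, IsCompl (p i) (q i)) →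
    (∀ i, p i = ⊥) ∨ (∀ i, q i = ⊥)

/-- If M is an indecomposable representation of (Q, αβ = 0) with
M_α ≠ 0 and M_β ≠ 0, then M has a nonzero endomorphism φ with φ² = 0. -/
theorem stmt0 {k : Type} [Field k] {n : ℕ} (hn : 3 ≤ n) (M : QRep k n)
    (hM : QIndec M) (hα : M.α ≠ 0) (hβ : M.β ≠ 0) :
    ∃ φ : QEnd M, (∃ i, φ.f i ≠ 0) ∧ ∀ i, φ.f i ∘ₗ φ.f i = 0 := by
  classical
  -- pick x with α x ≠ 0 and y with β y ≠ 0
  obtain ⟨x, hx⟩ : ∃ x, M.α x ≠ 0 := by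
    by_contra h; push_neg at h; exact hα (LinearMap.ext h)
  obtain ⟨y, hy⟩ : ∃ y, M.β y ≠ 0 := by
    by_contra h; push_neg at h; exact hβ (LinearMap.ext h)
  -- a functional on V 1 nonzero at α x
  obtain ⟨f, hf, -⟩ := (⊥ : Submodule k (M.V 1)).exists_dual_map_eq_bot_of_notMem
    (x := M.α x) (by simpa using hx) inferInstance
  -- s : V 1 → V 3, s v = f v • y
  set s : M.V 1 →ₗ[k] M.V 3 := (LinearMap.toSpanSingleton k (M.V 3) y) ∘ₗ f with hs
  set g : M.V 2 →ₗ[k] M.V 2 := M.β ∘ₗ s ∘ₗ M.α with hg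
  have hrel : ∀ v, M.α (M.β v) = 0 := fun v => by
    have := LinearMap.ext_iff.mp M.rel v; simpa using this
  have hF : ∀ i, (fun i => match i with | 2 => g | _ => 0 :
      ∀ i, M.V i →ₗ[k] M.V i) i ∘ₗ (fun i => match i with | 2 => g | _ => 0 :
      ∀ i, M.V i →ₗ[k] M.V i) i = 0 := by
    intro i
    match i with
    | 2 =>
      ext v
      simp only [LinearMap.comp_apply, hg, LinearMap.zero_apply]
      rw [hrel]
      simp
    | 0 => simp
    | 1 => simp
    | (m+3) => simp
  refine ⟨⟨fun i => match i with | 2 => g | _ => 0, ?_, ?_, ?_, ?_⟩, ⟨2, ?_⟩, hF⟩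
  · ext v
    simp [hg, hrel]
  · ext v
    simp [hg, hrel]
  · simp
  · intro i h1 h2
    have h3 : i - 1 ≠ 2 := by omega
    match i, h1 with
    | (m+4), _ =>
      show (0 : M.V (m+4-1) →ₗ[k] M.V (m+4-1)) ∘ₗ _ = _ ∘ₗ 0
      match m with
      | 0 => simp
      | (j+1) => simp
  · intro h0
    have : g (x) = 0 := by rw [show g = 0 from h0]; simp
    rw [hg] at this
    simp only [LinearMap.comp_apply, hs, LinearMap.toSpanSingleton_apply] at this
    rw [map_smul] at this
    rcases smul_eq_zero.mp this with h | h
    · exact hf h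
    · exact hy h
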